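/- Let (G_n)_{n₀ ≤ n ≤ λ} be a decreasing sequence of measurable subsets of a set Q of finite measure, and suppose there are constants C > 0 and q > 1 such that |G_{n+1}| ≤ C |Q|^{1/(q(q-1))·(q-1)} · |G_n \ G_{n+1}|^{(q-1)/q} in the sense that |G_{n+1}|^{q/(q-1)} ≤ C' |Q|^{1/(q-1)} |G_n \ G_{n+1}| for all n₀ ≤ n < λ. Then |G_λ| ≤ C'' (λ - n₀)^{-(q-1)/q} |Q| for a constant C'' depending only on C' and q. -/

import Mathlib

open MeasureTheory

/-- De Giorgi-type summation lemma: if `|G_{n+1}|^{q/(q-1)} ≤ C' |Q|^{1/(q-1)} |G_n \ G_{n+1}|`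
for `n₀ ≤ n < λ` along a decreasing family of subsets of `Q`, then
`|G_λ| ≤ C'' (λ-n₀)^{-(q-1)/q} |Q|` with `C''` depending only on `C'` and `q`. -/
theorem decreasing_sets_measure_decay
    (C' q : ℝ) (hC' : 0 < C') (hq : 1 < q) :
    ∃ C'' > 0, ∀ {X : Type} [MeasurableSpace X] (μ : Measure X)
      (Q : Set X) (G : ℕ → Set X) (n₀ lam : ℕ),
      μ Q < ⊤ → (∀ n, MeasurableSet (G n)) → (∀ n, G n ⊆ Q) →
      (∀ n, G (n + 1) ⊆ G n) → n₀ < lam →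
      (∀ n, n₀ ≤ n → n < lam →
        (μ (G (n + 1))).toReal ^ (q / (q - 1)) ≤
          C' * (μ Q).toReal ^ (1 / (q - 1)) * (μ (G n \ G (n + 1))).toReal) →
      (μ (G lam)).toReal ≤
        C'' * ((lam : ℝ) - (n₀ : ℝ)) ^ (-(q - 1) / q) * (μ Q).toReal := by
  have hq1 : (0:ℝ) < q - 1 := by linarith
  have hq0 : (0:ℝ) < q := by linarith
  set r : ℝ := q / (q - 1) with hrdef
  have hrpos : 0 < r := div_pos hq0 hq1
  have hinjr : 1 / r = (q - 1) / q := by rw [hrdef, one_div_div]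
  refine ⟨C' ^ ((q - 1) / q), Real.rpow_pos_of_pos hC' _, ?_⟩
  intro X _ μ Q G n₀ lam hQ hmeas hsub hdec hlt hrec
  have hQfin : μ Q ≠ ⊤ := hQ.ne
  have hfin : ∀ n, μ (G n) ≠ ⊤ := fun n => (lt_of_le_of_lt (measure_mono (hsub n)) hQ).ne
  set QT : ℝ := (μ Q).toReal with hQT
  have hQT0 : 0 ≤ QT := ENNReal.toReal_nonneg
  set a : ℕ → ℝ := fun n => (μ (G n)).toReal with ha
  have ha0 : ∀ n, 0 ≤ a n := fun n => ENNReal.toReal_nonneg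
  have hanti : Antitone G := antitone_nat_of_succ_le hdec
  have haQ : ∀ n, a n ≤ QT := fun n =>
    ENNReal.toReal_mono hQfin (measure_mono (hsub n))
  have hmono : ∀ m n, m ≤ n → a n ≤ a m := fun m n h =>
    ENNReal.toReal_mono (hfin m) (measure_mono (hanti h))
  set d : ℕ → ℝ := fun n => (μ (G n \ G (n + 1))).toReal with hd
  have hdtele : ∀ n, d n = a n - a (n + 1) := by
    intro n
    have h1 : μ (G n \ G (n + 1)) = μ (G n) - μ (G (n + 1)) :=
      measure_diff (hdec n) (hmeas (n + 1)).nullMeasurableSet (hfin (n + 1))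
    show (μ (G n \ G (n + 1))).toReal = _
    rw [h1, ENNReal.toReal_sub_of_le (measure_mono (hdec n)) (hfin n)]
  -- sum of d over Ico n₀ lam
  have hsum : ∑ n ∈ Finset.Ico n₀ lam, d n = a n₀ - a lam := by
    calc ∑ n ∈ Finset.Ico n₀ lam, d n
        = ∑ n ∈ Finset.Ico n₀ lam, (-(a (n + 1)) - -(a n)) := by
          refine Finset.sum_congr rfl fun n _ => ?_
          rw [hdtele n]; ring
      _ = (∑ n ∈ Finset.range lam, (-(a (n + 1)) - -(a n))) -
            ∑ n ∈ Finset.range n₀, (-(a (n + 1)) - -(a n)) :=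
          Finset.sum_Ico_eq_sub _ hlt.le
      _ = (-(a lam) - -(a 0)) - (-(a n₀) - -(a 0)) := by
          rw [Finset.sum_range_sub (fun n => -(a n)),
            Finset.sum_range_sub (fun n => -(a n))]
      _ = a n₀ - a lam := by ring
  have hsumQ : ∑ n ∈ Finset.Ico n₀ lam, d n ≤ QT := by
    rw [hsum]
    have := ha0 lam
    linarith [haQ n₀]
  -- key pointwise bound
  have hkey : ∀ n ∈ Finset.Ico n₀ lam,
      a lam ^ r ≤ C' * QT ^ (1 / (q - 1)) * d n := by
    intro n hn
    rw [Finset.mem_Ico] at hn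
    have h1 : a lam ≤ a (n + 1) := hmono (n + 1) lam hn.2
    calc a lam ^ r ≤ a (n + 1) ^ r :=
          Real.rpow_le_rpow (ha0 lam) h1 hrpos.le
      _ ≤ C' * QT ^ (1 / (q - 1)) * d n := hrec n hn.1 hn.2
  set N : ℝ := (lam : ℝ) - (n₀ : ℝ) with hN
  have hNcard : ((Finset.Ico n₀ lam).card : ℝ) = N := by
    rw [Nat.card_Ico, Nat.cast_sub hlt.le]
  have hNpos : 0 < N := by
    rw [hN]
    have : (n₀ : ℝ) < (lam : ℝ) := by exact_mod_cast hlt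
    linarith
  have hmain : N * a lam ^ r ≤ C' * QT ^ (1 / (q - 1)) * QT := by
    have h2 : ∑ _n ∈ Finset.Ico n₀ lam, a lam ^ r ≤
        ∑ n ∈ Finset.Ico n₀ lam, C' * QT ^ (1 / (q - 1)) * d n :=
      Finset.sum_le_sum hkey
    rw [Finset.sum_const, ← Finset.mul_sum, nsmul_eq_mul, hNcard] at h2
    refine h2.trans ?_
    have hc : 0 ≤ C' * QT ^ (1 / (q - 1)) :=
      mul_nonneg hC'.le (Real.rpow_nonneg hQT0 _)
    exact mul_le_mul_of_nonneg_left hsumQ hc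
  rcases eq_or_lt_of_le hQT0 with hQ0 | hQpos
  · -- μ Q has zero measure: a lam ≤ QT = 0
    have h1 : a lam ≤ 0 := (haQ lam).trans_eq hQ0.symm
    have h2 : (μ (G lam)).toReal = 0 := le_antisymm h1 (ha0 lam)
    rw [h2]
    positivity
  · -- main case
    have hQr : QT ^ (1 / (q - 1)) * QT = QT ^ r := by
      nth_rewrite 2 [← Real.rpow_one QT]
      rw [← Real.rpow_add hQpos]
      congr 1
      rw [hrdef]
      field_simp
      ring
    have hmain2 : a lam ^ r ≤ C' * QT ^ r / N := by
      rw [mul_assoc, hQr] at hmain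
      rw [le_div_iff₀ hNpos]
      linarith [hmain]
    have halam : a lam = (a lam ^ r) ^ (1 / r) := by
      rw [← Real.rpow_mul (ha0 lam), mul_one_div, div_self hrpos.ne', Real.rpow_one]
    have hRHS : 0 ≤ C' * QT ^ r / N := by positivity
    show a lam ≤ _
    calc a lam = (a lam ^ r) ^ (1 / r) := halam
      _ ≤ (C' * QT ^ r / N) ^ (1 / r) :=
          Real.rpow_le_rpow (Real.rpow_nonneg (ha0 lam) r) hmain2 (by positivity)
      _ = C' ^ ((q - 1) / q) * N ^ (-(q - 1) / q) * QT := by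
          rw [Real.div_rpow (by positivity) hNpos.le,
            Real.mul_rpow hC'.le (Real.rpow_nonneg hQT0 r),
            ← Real.rpow_mul hQT0, mul_one_div, div_self hrpos.ne',
            Real.rpow_one, hinjr]
          rw [div_eq_mul_inv, ← Real.rpow_neg_one (N ^ ((q-1)/q)),
            ← Real.rpow_mul hNpos.le]
          ring_nf
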